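/- Let x ∈ ℝ⁹ with x₁ ≥ ⋯ ≥ x₉ > 0 such that L₁(x) (as defined below) is positive semidefinite and det L₁(x) = 0. Then (x₃−x₅)² − 4x₄x₇ + (x₃−x₅)(x₂−x₆) + 2x₄(x₁−x₈) ≤ 0. -/

import Mathlib

/-!
For a singular matrix the adjugate has rank at most one; for the symmetric matrix
`A = !![a, d, e; d, b, f; e, f, c]` this is Jacobi's identity `C₁₂² = C₁₁ C₂₂ - c · det A` between
the cofactors `C₁₁ = bc - f²`, `C₂₂ = ac - e²` and `C₁₂ = ef - cd`. When `A` is positive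
semidefinite and singular, `C₁₂² = C₁₁ C₂₂` with `C₁₁ ≥ 0`, so `C₁₂ ≤ C₁₁` as soon as
`C₂₂ ≤ C₁₁`, which the ordering of `x` provides for `L₁(x)`. The claimed inequality is exactly
`C₁₂ ≤ C₁₁` for `A = L₁(x)`.
-/

/-- The Hildebrand matrix `L₁` built from a vector `x ∈ ℝ⁹` (indices `x 0, …, x 8`
correspond to `x₁, …, x₉`). -/
def L1 (x : Fin 9 → ℝ) : Matrix (Fin 3) (Fin 3) ℝ :=
  !![2 * x 8, x 7 - x 0, x 5 - x 1;
     x 7 - x 0, 2 * x 6, x 4 - x 2;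
     x 5 - x 1, x 4 - x 2, 2 * x 3]

theorem Matrix.sq_cofactor_add_mul_det_symm_fin_three {R : Type*} [CommRing R]
    (a b c d e f : R) :
    (e * f - c * d) ^ 2 + c * (!![a, d, e; d, b, f; e, f, c]).det =
      (b * c - f ^ 2) * (a * c - e ^ 2) := by
  rw [Matrix.det_fin_three]
  simp only [Matrix.of_apply, Matrix.cons_val', Matrix.cons_val_zero, Matrix.cons_val_one,
    Matrix.cons_val_two, Matrix.empty_val', Matrix.cons_val_fin_one, Matrix.head_cons,
    Matrix.tail_cons, Matrix.head_fin_const]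
  ring

theorem Matrix.PosSemidef.cofactor_le_of_det_eq_zero {a b c d e f : ℝ}
    (hA : (!![a, d, e; d, b, f; e, f, c]).PosSemidef)
    (hdet : (!![a, d, e; d, b, f; e, f, c]).det = 0) (hab : a ≤ b) (hfe : f ^ 2 ≤ e ^ 2) :
    e * f - c * d ≤ b * c - f ^ 2 := by
  have hc : 0 ≤ c := hA.diag_nonneg (i := 2)
  have hC₁₁ : 0 ≤ b * c - f ^ 2 := by
    have hsub : (!![a, d, e; d, b, f; e, f, c]).submatrix ![1, 2] ![1, 2] = !![b, f; f, c] := by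
      ext i j; fin_cases i <;> fin_cases j <;> rfl
    have := (hA.submatrix ![1, 2]).det_nonneg
    rwa [hsub, Matrix.det_fin_two_of, ← sq] at this
  have hC₂₂ : a * c - e ^ 2 ≤ b * c - f ^ 2 := by
    linarith [mul_le_mul_of_nonneg_right hab hc]
  have hJacobi := Matrix.sq_cofactor_add_mul_det_symm_fin_three a b c d e f
  rw [hdet, mul_zero, add_zero] at hJacobi
  refine le_of_sq_le_sq ?_ hC₁₁
  rw [hJacobi, sq (b * c - f ^ 2)]
  exact mul_le_mul_of_nonneg_left hC₂₂ hC₁₁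

theorem L1_boundary_ineq_det89 (x : Fin 9 → ℝ)
    (hsort : ∀ i j : Fin 9, i ≤ j → x j ≤ x i)
    (hL1 : (L1 x).PosSemidef)
    (hdet : (L1 x).det = 0) :
    (x 2 - x 4) ^ 2 - 4 * x 3 * x 6 + (x 2 - x 4) * (x 1 - x 5) +
      2 * x 3 * (x 0 - x 7) ≤ 0 := by
  have h12 := hsort 1 2 (by decide)
  have h24 := hsort 2 4 (by decide)
  have h45 := hsort 4 5 (by decide)
  have h68 := hsort 6 8 (by decide)
  have hfe : (x 4 - x 2) ^ 2 ≤ (x 5 - x 1) ^ 2 := by nlinarith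
  have hcofactor := hL1.cofactor_le_of_det_eq_zero hdet (by linarith) hfe
  linear_combination hcofactor
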